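/- arXiv:2411.11546 — 4 statements merged into one kernel-verified Lean document; each statement's English description precedes it below -/
import Mathlib

section
/- For every N, every m, and every permutation s of Fin m, the element w_{𝔰𝔬(N)}(s) := ∑_{i : Fin m → Fin N} ι(X (i 0) (i (s 0))) · ι(X (i 1) (i (s 1))) ⋯ ι(X (i (m−1)) (i (s (m−1)))) belongs to the center of the universal enveloping algebra U(𝔰𝔬(N)). -/
open Matrix in
noncomputable section
open Matrix

attribute [local instance 100] LieRing.ofAssociativeRing

/-- The anti-diagonal identity matrix. -/
def soJ (N : ℕ) : Matrix (Fin N) (Fin N) ℂ := fun i j => if j = Fin.rev i then 1 else 0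

lemma soJ_mul (N : ℕ) (A : Matrix (Fin N) (Fin N) ℂ) (i j : Fin N) :
    (soJ N * A) i j = A (Fin.rev i) j := by
  simp [soJ, Matrix.mul_apply, Fin.rev_eq_iff]

lemma mul_soJ (N : ℕ) (A : Matrix (Fin N) (Fin N) ℂ) (i j : Fin N) :
    (A * soJ N) i j = A i (Fin.rev j) := by
  classical
  simp only [Matrix.mul_apply, soJ]
  rw [Finset.sum_eq_single (Fin.rev j)]
  · simp
  · intro b _ hb
    rw [if_neg, mul_zero]
    intro h
    exact hb (by rw [h, Fin.rev_rev])
  · simp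

/-- The Lie algebra 𝔰𝔬(N). -/
def soL (N : ℕ) : LieSubalgebra ℂ (Matrix (Fin N) (Fin N) ℂ) where
  carrier := {A | Aᵀ * soJ N = -(soJ N * A)}
  add_mem' := by
    intro A B hA hB
    simp only [Set.mem_setOf_eq] at *
    rw [Matrix.transpose_add, Matrix.add_mul, hA, hB, Matrix.mul_add, neg_add]
  zero_mem' := by
    simp [Set.mem_setOf_eq]
  smul_mem' := by
    intro c A hA
    simp only [Set.mem_setOf_eq] at *
    rw [Matrix.transpose_smul, Matrix.smul_mul, hA, Matrix.mul_smul, smul_neg]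
  lie_mem' := by
    intro A B hA hB
    simp only [Set.mem_setOf_eq] at *
    rw [Ring.lie_def, Matrix.transpose_sub, Matrix.transpose_mul, Matrix.transpose_mul,
      Matrix.sub_mul, Matrix.mul_assoc, Matrix.mul_assoc, hA, hB, Matrix.mul_neg,
      Matrix.mul_neg, ← Matrix.mul_assoc, ← Matrix.mul_assoc, hA, hB, Matrix.neg_mul,
      Matrix.neg_mul, neg_neg, neg_neg, Matrix.mul_sub, Matrix.mul_assoc, Matrix.mul_assoc]
    abel

/-- The generators X_{ab} of 𝔰𝔬(N), as matrices. -/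
def soXmat (N : ℕ) (a b : Fin N) : Matrix (Fin N) (Fin N) ℂ :=
  Matrix.single a b 1 - Matrix.single (Fin.rev b) (Fin.rev a) 1

lemma soXmat_mem (N : ℕ) (a b : Fin N) : soXmat N a b ∈ soL N := by
  change (soXmat N a b)ᵀ * soJ N = -(soJ N * soXmat N a b)
  ext i j
  rw [mul_soJ]
  simp only [Matrix.neg_apply, soJ_mul, soXmat, Matrix.sub_apply, Matrix.transpose_apply,
    Matrix.single, Matrix.of_apply]
  simp only [Fin.rev_inj, Fin.rev_eq_iff, neg_sub]
  simp [and_comm]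

/-- The generators of 𝔰𝔬(N) as elements of the Lie algebra. -/
def soX (N : ℕ) (a b : Fin N) : soL N := ⟨soXmat N a b, soXmat_mem N a b⟩

/-- The extension of the 𝔰𝔬(N) weight system to permutations. -/
def wso (N : ℕ) {m : ℕ} (s : Equiv.Perm (Fin m)) :
    UniversalEnvelopingAlgebra ℂ ↥(soL N) :=
  ∑ i : Fin m → Fin N,
    (List.ofFn fun k : Fin m =>
      UniversalEnvelopingAlgebra.ι ℂ (soX N (i k) (i (s k)))).prod

/-!
For `x ∈ 𝔰𝔬(N)` the generators transform like a tensor with two indices,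
`⁅x, X a b⁆ = ∑ a', x a' a • X a' b - ∑ b', x b b' • X a b'`. By the Leibniz rule,
`⁅ι x, w(s)⁆` is a sum over positions `k` of two kinds of terms: `x` moves the index `i k` in
the first slot of factor `k`, or the index `i (s k)` in the second slot of factor `k`. Each index
value `i k` occurs exactly twice, in the first slot of factor `k` and the second slot of factor
`s⁻¹ k`, and the change of summation variable `(i, a) ↦ (update i k a, i k)` matches the two
terms moving it, so everything cancels. Since the `ι x` generate `U(𝔰𝔬(N))`, `w(s)` is central.
-/

open Function

theorem lie_prod_ofFn {A : Type*} [Ring A] {m : ℕ} (x : A) (f : Fin m → A) :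
    ⁅x, (List.ofFn f).prod⁆ = ∑ k, (List.ofFn (update f k ⁅x, f k⁆)).prod := by
  induction m with
  | zero => simp [Ring.lie_def]
  | succ m ih =>
    have lie_mul (a b : A) : ⁅x, a * b⁆ = ⁅x, a⁆ * b + a * ⁅x, b⁆ := by
      simp only [Ring.lie_def]; noncomm_ring
    rw [Fin.sum_univ_succ, List.ofFn_succ, List.prod_cons, lie_mul, ih, Finset.mul_sum]
    congr 1
    · simp [List.ofFn_succ, Fin.succ_ne_zero]
    · refine Finset.sum_congr rfl fun k _ => ?_
      rw [List.ofFn_succ, List.prod_cons, update_of_ne (Fin.succ_ne_zero k).symm]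
      exact congrArg (fun g => f 0 * (List.ofFn g).prod) (Fin.tail_update_succ f k _).symm

theorem Fintype.sum_sum_update {ι n β : Type*} [DecidableEq ι] [Fintype ι] [DecidableEq n]
    [Fintype n] [AddCommMonoid β] (k : ι) (g : (ι → n) → n → β) :
    ∑ i : ι → n, ∑ a, g (update i k a) (i k) = ∑ i, ∑ b, g i b := by
  have hσ : Involutive fun p : (ι → n) × n => (update p.1 k p.2, p.1 k) := by
    rintro ⟨i, a⟩
    simp
  simpa only [← Fintype.sum_prod_type', Involutive.coe_toPerm] using
    Equiv.sum_comp (hσ.toPerm _) fun p => g p.1 p.2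

section PermContraction

variable {K A n : Type*} [CommRing K] [Ring A] [Algebra K A] [Fintype n]

def permContraction (Y : n → n → A) {m : ℕ} (s : Equiv.Perm (Fin m)) : A :=
  ∑ i : Fin m → n, (List.ofFn fun k => Y (i k) (i (s k))).prod

variable {x : A} {Y : n → n → A} {M : n → n → K}

theorem lie_prod_ofFn_of_lie_eq
    (hY : ∀ a b, ⁅x, Y a b⁆ = ∑ a', M a' a • Y a' b - ∑ b', M b b' • Y a b')
    {m : ℕ} (i j : Fin m → n) :
    ⁅x, (List.ofFn fun k => Y (i k) (j k)).prod⁆ =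
      ∑ k, (∑ a, M a (i k) • (List.ofFn fun l => Y (update i k a l) (j l)).prod -
        ∑ b, M (j k) b • (List.ofFn fun l => Y (i l) (update j k b l)).prod) := by
  rw [lie_prod_ofFn]
  refine Finset.sum_congr rfl fun k _ => ?_
  let F := MultilinearMap.mkPiAlgebraFin K m A
  have update_left (a : n) :
      update (fun l => Y (i l) (j l)) k (Y a (j k)) = fun l => Y (update i k a l) (j l) := by
    ext l; rcases eq_or_ne l k with rfl | h <;> simp [*]
  have update_right (b : n) :
      update (fun l => Y (i l) (j l)) k (Y (i k) b) = fun l => Y (i l) (update j k b l) := by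
    ext l; rcases eq_or_ne l k with rfl | h <;> simp [*]
  change F _ = ∑ a, M a (i k) • F _ - ∑ b, M (j k) b • F _
  rw [hY, F.map_update_sub, F.map_update_sum, F.map_update_sum]
  simp only [F.map_update_smul, update_left, update_right]

theorem lie_permContraction_eq_zero [DecidableEq n]
    (hY : ∀ a b, ⁅x, Y a b⁆ = ∑ a', M a' a • Y a' b - ∑ b', M b b' • Y a b')
    {m : ℕ} (s : Equiv.Perm (Fin m)) : ⁅x, permContraction Y s⁆ = 0 := by
  let G (i j : Fin m → n) : A := (List.ofFn fun l => Y (i l) (j l)).prod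
  let T (k : Fin m) : A := ∑ i : Fin m → n, ∑ b, M (i k) b • G i (update i k b ∘ s)
  have hT_left (k : Fin m) :
      ∑ i : Fin m → n, ∑ a, M a (i k) • G (update i k a) (i ∘ s) = T k := by
    simpa using Fintype.sum_sum_update k fun i b => M (i k) b • G i (update i k b ∘ s)
  have hT_right (k : Fin m) :
      ∑ i : Fin m → n, ∑ b, M (i (s k)) b • G i (update (i ∘ s) k b) = T (s k) := by
    simp only [T, update_comp_equiv, Equiv.symm_apply_apply]
  calc ⁅x, permContraction Y s⁆
      = ∑ k, (T k - T (s k)) := by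
        simp only [permContraction, lie_sum, lie_prod_ofFn_of_lie_eq hY]
        rw [Finset.sum_comm]
        refine Finset.sum_congr rfl fun k _ => ?_
        rw [← hT_left, ← hT_right, Finset.sum_sub_distrib]
        rfl
    _ = 0 := by rw [Finset.sum_sub_distrib, Equiv.sum_comp s T, sub_self]

end PermContraction

namespace UniversalEnvelopingAlgebra

variable (R L : Type*) [CommRing R] [LieRing L] [LieAlgebra R L]

theorem adjoin_range_ι :
    Algebra.adjoin R (Set.range (ι R : L → UniversalEnvelopingAlgebra R L)) = ⊤ := by
  have hrange : Set.range (ι R : L → UniversalEnvelopingAlgebra R L) =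
      mkAlgHom R L '' Set.range (TensorAlgebra.ι R) := by
    rw [← Set.range_comp]; rfl
  rw [hrange, ← AlgHom.map_adjoin, TensorAlgebra.adjoin_range_ι (R := R) (M := L),
    Algebra.map_top, AlgHom.range_eq_top]
  exact RingCon.mkₐ_surjective (α := R) _

variable {R L}

theorem mem_center_of_forall_commute_ι {z : UniversalEnvelopingAlgebra R L}
    (h : ∀ x, Commute (ι R x) z) : z ∈ Subalgebra.center R (UniversalEnvelopingAlgebra R L) := by
  rw [Subalgebra.mem_center_iff]
  intro y
  have hz : z ∈ Subalgebra.centralizer R (Set.range (ι R : L → _)) := by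
    rintro _ ⟨x, rfl⟩; exact (h x).eq
  exact (Algebra.adjoin_le_centralizer_centralizer R _
    (adjoin_range_ι R L ▸ Algebra.mem_top : y ∈ _) z hz).symm

end UniversalEnvelopingAlgebra

theorem soL_apply_rev_rev {N : ℕ} (x : soL N) (i j : Fin N) :
    (x : Matrix (Fin N) (Fin N) ℂ) (Fin.rev j) (Fin.rev i) =
      -(x : Matrix (Fin N) (Fin N) ℂ) i j := by
  have hx : (x : Matrix (Fin N) (Fin N) ℂ)ᵀ * soJ N = -(soJ N * x) := x.2
  simpa [mul_soJ, soJ_mul] using congrFun₂ hx (Fin.rev i) j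

theorem lie_soX {N : ℕ} (x : soL N) (a b : Fin N) :
    ⁅x, soX N a b⁆ = ∑ a', (x : Matrix (Fin N) (Fin N) ℂ) a' a • soX N a' b -
      ∑ b', (x : Matrix (Fin N) (Fin N) ℂ) b b' • soX N a b' := by
  have hx := soL_apply_rev_rev x
  have eq_rev (i j : Fin N) : i = j.rev ↔ j = i.rev := by rw [eq_comm, Fin.rev_eq_iff]
  apply Subtype.ext
  ext p q
  simp only [soX, soXmat, LieSubalgebra.coe_bracket, Ring.lie_def, mul_sub, sub_mul,
    Matrix.sub_apply, Matrix.mul_apply, single_apply, ite_and, mul_ite, mul_one, mul_zero,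
    Finset.sum_ite_eq, Finset.mem_univ, ↓reduceIte, Fin.rev_eq_iff, eq_rev b, eq_rev a,
    Finset.sum_ite_eq', ite_mul, one_mul, zero_mul, Finset.sum_ite_irrel, Finset.sum_const_zero,
    SetLike.mk_smul_mk, AddSubgroupClass.coe_sub, AddSubmonoidClass.coe_finsetSum,
    Matrix.sum_apply, Matrix.smul_apply, smul_eq_mul, Finset.sum_sub_distrib]
  have hbp : x.1 b p.rev = -x.1 p b.rev := by simpa using hx p b.rev
  have hqa : x.1 q.rev a = -x.1 a.rev q := by simpa using hx a.rev q
  rw [hbp, hqa]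
  split_ifs <;> abel

open UniversalEnvelopingAlgebra

/-- w_{𝔰𝔬(N)}(s) belongs to the center of the universal enveloping algebra. -/
theorem wso_mem_center (N m : ℕ) (s : Equiv.Perm (Fin m)) :
    wso N s ∈ Subalgebra.center ℂ (UniversalEnvelopingAlgebra ℂ ↥(soL N)) := by
  refine mem_center_of_forall_commute_ι fun x => ?_
  have hY (a b : Fin N) : ⁅ι ℂ x, ι ℂ (soX N a b)⁆ =
      ∑ a', (x : Matrix (Fin N) (Fin N) ℂ) a' a • ι ℂ (soX N a' b) -
        ∑ b', (x : Matrix (Fin N) (Fin N) ℂ) b b' • ι ℂ (soX N a b') := by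
    simp only [← LieHom.map_lie, lie_soX, map_sub, map_sum, map_smul]
  exact commute_iff_lie_eq.mpr (lie_permContraction_eq_zero hY s)
end
end

section
/- Multiplicativity of w_{𝔰𝔬(N)} under concatenation: for all m, n, every permutation s of Fin m and every permutation t of Fin n, let s⊕t be the permutation of Fin (m+n) obtained by transporting Equiv.Perm.sumCongr s t along the equivalence finSumFinEquiv : Fin m ⊕ Fin n ≃ Fin (m+n) (so s⊕t acts as s on the first m elements and as t on the last n elements). Then w_{𝔰𝔬(N)}(s⊕t) = w_{𝔰𝔬(N)}(s) * w_{𝔰𝔬(N)}(t) in U(𝔰𝔬(N)). -/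
open Matrix in
noncomputable section
open Matrix

attribute [local instance 100] LieRing.ofAssociativeRing

/-!
Nothing specific to `𝔰𝔬(N)` is involved: for any family `x a b` in a semiring, the sum over
index functions `i : Fin (m + n) → ι` of the ordered products `∏ₖ x (i k) (i (σ k))` factors
for `σ = s ⊕ t`. Writing `i = Fin.append u v`, the factor sequence of `i` for `s ⊕ t` is the
factor sequence of `u` for `s` followed by that of `v` for `t`, so the ordered product splits,
and `Fin.appendEquiv` turns the sum over `i` into the double sum over `(u, v)`.
-/

section PermWordSum

variable {R ι : Type*} [Semiring R] [Fintype ι]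

def permWordSum (x : ι → ι → R) {m : ℕ} (s : Equiv.Perm (Fin m)) : R :=
  ∑ i : Fin m → ι, (List.ofFn fun k => x (i k) (i (s k))).prod

theorem Fin.append_permCongr_sumCongr {α : Type*} {m n : ℕ} (u : Fin m → α) (v : Fin n → α)
    (s : Equiv.Perm (Fin m)) (t : Equiv.Perm (Fin n)) (k : Fin (m + n)) :
    Fin.append u v (Equiv.permCongr finSumFinEquiv (Equiv.Perm.sumCongr s t) k) =
      Fin.append (u ∘ s) (v ∘ t) k := by
  refine Fin.addCases (fun k => ?_) (fun k => ?_) k <;> simp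

theorem permWordSum_permCongr_sumCongr (x : ι → ι → R) {m n : ℕ} (s : Equiv.Perm (Fin m))
    (t : Equiv.Perm (Fin n)) :
    permWordSum x (Equiv.permCongr finSumFinEquiv (Equiv.Perm.sumCongr s t)) =
      permWordSum x s * permWordSum x t := by
  rw [permWordSum, permWordSum, permWordSum, Finset.sum_mul_sum, ← Fintype.sum_prod_type']
  refine Fintype.sum_equiv (Fin.appendEquiv m n).symm _ _ fun i => ?_
  obtain ⟨⟨u, v⟩, rfl⟩ := (Fin.appendEquiv m n).surjective i
  have factors : (fun k => x (Fin.append u v k) (Fin.append u v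
      (Equiv.permCongr finSumFinEquiv (Equiv.Perm.sumCongr s t) k))) =
      Fin.append (fun k => x (u k) (u (s k))) (fun k => x (v k) (v (t k))) := by
    funext k
    rw [Fin.append_permCongr_sumCongr]
    refine Fin.addCases (fun k => ?_) (fun k => ?_) k <;> simp
  simp only [Equiv.symm_apply_apply, Fin.appendEquiv_apply, factors, List.ofFn_fin_append,
    List.prod_append]

end PermWordSum

theorem wso_eq_permWordSum (N : ℕ) {m : ℕ} (s : Equiv.Perm (Fin m)) :
    wso N s = permWordSum (fun a b => UniversalEnvelopingAlgebra.ι ℂ (soX N a b)) s :=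
  rfl

/-- Multiplicativity of w_{𝔰𝔬(N)} under concatenation of permutations. -/
theorem wso_multiplicative (N m n : ℕ) (s : Equiv.Perm (Fin m)) (t : Equiv.Perm (Fin n)) :
    wso N (Equiv.permCongr finSumFinEquiv (Equiv.Perm.sumCongr s t)) =
      wso N s * wso N t := by
  simp only [wso_eq_permWordSum]
  exact permWordSum_permCongr_sumCongr _ s t

end
end

section
/- Reversal symmetry of w_{𝔰𝔬(N)}: for every N, every m, and every permutation s of Fin m, one has w_{𝔰𝔬(N)}(s⁻¹) = (−1)^m · w_{𝔰𝔬(N)}(s) in U(𝔰𝔬(N)). -/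
open Matrix in
noncomputable section
open Matrix

attribute [local instance 100] LieRing.ofAssociativeRing

lemma soX_rev_rev (N : ℕ) (a b : Fin N) : soX N (Fin.rev b) (Fin.rev a) = -soX N a b :=
  Subtype.ext <| by
    change soXmat N (Fin.rev b) (Fin.rev a) = -soXmat N a b
    rw [soXmat, soXmat, Fin.rev_rev, Fin.rev_rev, neg_sub]

lemma List.prod_ofFn_neg {M : Type*} [Monoid M] [HasDistribNeg M] {m : ℕ} (f : Fin m → M) :
    (List.ofFn fun k => -f k).prod = (-1) ^ m * (List.ofFn f).prod := by
  rw [List.ofFn_comp' f Neg.neg, List.prod_map_neg, List.length_ofFn]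

lemma neg_one_pow_smul_eq_mul {R A : Type*} [CommRing R] [Ring A] [Algebra R A] (m : ℕ) (x : A) :
    ((-1 : R) ^ m) • x = (-1) ^ m * x := by
  rw [Algebra.smul_def, map_pow, map_neg, map_one]

/-- Reversal symmetry of w_{𝔰𝔬(N)}: w(s⁻¹) = (-1)^m · w(s). -/
theorem wso_inv (N m : ℕ) (s : Equiv.Perm (Fin m)) :
    wso N s⁻¹ = ((-1 : ℂ) ^ m) • wso N s := by
  -- reindex by `i ↦ rev ∘ i ∘ s`: each factor `X (i k) (i (s k))` becomes its negative
  rw [wso, wso, Finset.smul_sum, ← (Equiv.arrowCongr s.symm Fin.revPerm).sum_comp]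
  refine Finset.sum_congr rfl fun i _ => ?_
  have hfactor (k : Fin m) : soX N (Fin.rev (i (s k))) (Fin.rev (i (s (s⁻¹ k)))) =
      -soX N (i k) (i (s k)) := by
    rw [Equiv.Perm.coe_inv, Equiv.apply_symm_apply, soX_rev_rev]
  simp only [Equiv.arrowCongr_apply, Function.comp_apply, Equiv.symm_symm, Fin.revPerm_apply,
    hfactor, map_neg, List.prod_ofFn_neg, neg_one_pow_smul_eq_mul]

end
end

section
/- Expression of the third Casimir of 𝔰𝔭(2M) (the 𝔰𝔭 specialization of the universal relation 2C₃ = (C₀ − 2)C₂ with C₀ = −2M): in U(𝔰𝔭(2M)) one has ∑_{a,b,c : Fin (2M)} ι(X a b) · ι(X b c) · ι(X c a) = (M + 1) · ∑_{a,b : Fin (2M)} ι(X a b) · ι(X b a). -/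
/-!
Since `X b c * X c a = X c a * X b c + ⁅X b c, X c a⁆` and `∑ c, ⁅X a c, X c b⁆ = (2M + 2) • X a b`,
the cubic sum `C₃ = ∑ X a b * X b c * X c a` equals `C₃' + (2M + 2) • C₂`, where
`C₃' = ∑ X a b * X c a * X b c` runs through the cycle in the opposite order.
The symmetry `X a b = -(ε a * ε b) • X b̄ ā` reverses that order at the cost of three signs whose
product is `-1`, so `C₃' = -C₃`, hence `2 • C₃ = (2M + 2) • C₂`.
-/

open Matrix in
noncomputable section
open Matrix

attribute [local instance 100] LieRing.ofAssociativeRing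

/-- The sign ε. -/
def spEps (M : ℕ) (i : Fin (2 * M)) : ℂ := if (i : ℕ) < M then 1 else -1

lemma spEps_rev (M : ℕ) (i : Fin (2 * M)) : spEps M (Fin.rev i) = -spEps M i := by
  have := i.isLt
  have h : (Fin.rev i : ℕ) = 2 * M - (i + 1) := Fin.val_rev i
  simp only [spEps, h]
  split_ifs <;> first | omega | norm_num

lemma spEps_sq (M : ℕ) (i : Fin (2 * M)) : spEps M i * spEps M i = 1 := by
  simp only [spEps]; split_ifs <;> norm_num

/-- The matrix K defining the symplectic form. -/
def spK (M : ℕ) : Matrix (Fin (2 * M)) (Fin (2 * M)) ℂ :=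
  fun i j => if j = Fin.rev i then spEps M i else 0

lemma spK_mul (M : ℕ) (A : Matrix (Fin (2 * M)) (Fin (2 * M)) ℂ) (i j : Fin (2 * M)) :
    (spK M * A) i j = spEps M i * A (Fin.rev i) j := by
  simp [spK, Matrix.mul_apply, Fin.rev_eq_iff]

lemma mul_spK (M : ℕ) (A : Matrix (Fin (2 * M)) (Fin (2 * M)) ℂ) (i j : Fin (2 * M)) :
    (A * spK M) i j = A i (Fin.rev j) * spEps M (Fin.rev j) := by
  classical
  simp only [Matrix.mul_apply, spK]
  rw [Finset.sum_eq_single (Fin.rev j)]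
  · simp [Fin.rev_rev]
  · intro b _ hb
    rw [if_neg, mul_zero]
    intro h
    exact hb (by rw [h, Fin.rev_rev])
  · simp

/-- The Lie algebra 𝔰𝔭(2M). -/
def spL (M : ℕ) : LieSubalgebra ℂ (Matrix (Fin (2 * M)) (Fin (2 * M)) ℂ) where
  carrier := {A | Aᵀ * spK M = -(spK M * A)}
  add_mem' := by
    intro A B hA hB
    simp only [Set.mem_setOf_eq] at *
    rw [Matrix.transpose_add, Matrix.add_mul, hA, hB, Matrix.mul_add, neg_add]
  zero_mem' := by
    simp [Set.mem_setOf_eq]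
  smul_mem' := by
    intro c A hA
    simp only [Set.mem_setOf_eq] at *
    rw [Matrix.transpose_smul, Matrix.smul_mul, hA, Matrix.mul_smul, smul_neg]
  lie_mem' := by
    intro A B hA hB
    simp only [Set.mem_setOf_eq] at *
    rw [Ring.lie_def, Matrix.transpose_sub, Matrix.transpose_mul, Matrix.transpose_mul,
      Matrix.sub_mul, Matrix.mul_assoc, Matrix.mul_assoc, hA, hB, Matrix.mul_neg,
      Matrix.mul_neg, ← Matrix.mul_assoc, ← Matrix.mul_assoc, hA, hB, Matrix.neg_mul,
      Matrix.neg_mul, neg_neg, neg_neg, Matrix.mul_sub, Matrix.mul_assoc, Matrix.mul_assoc]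
    abel

/-- The generators X_{ab} of 𝔰𝔭(2M), as matrices. -/
def spXmat (M : ℕ) (a b : Fin (2 * M)) : Matrix (Fin (2 * M)) (Fin (2 * M)) ℂ :=
  Matrix.single a b 1 -
    spEps M a • spEps M b • Matrix.single (Fin.rev b) (Fin.rev a) 1

lemma spXmat_mem (M : ℕ) (a b : Fin (2 * M)) : spXmat M a b ∈ spL M := by
  change (spXmat M a b)ᵀ * spK M = -(spK M * spXmat M a b)
  ext i j
  rw [mul_spK, Matrix.neg_apply, spK_mul]
  simp only [spXmat, Matrix.sub_apply, Matrix.transpose_apply, Matrix.smul_apply,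
    Matrix.single, Matrix.of_apply, smul_eq_mul]
  simp only [Fin.rev_inj, Fin.rev_eq_iff, Fin.rev_rev]
  by_cases hP : a = Fin.rev j ∧ b = i <;> by_cases hQ : a = Fin.rev i ∧ b = j
  · obtain ⟨ha, hb⟩ := hP
    subst ha; subst hb
    obtain ⟨-, hij⟩ := hQ
    subst hij
    simp only [and_self, if_true, if_pos rfl]
    rw [spEps_rev]
    ring
  · obtain ⟨ha, hb⟩ := hP
    subst ha; subst hb
    simp only [and_comm] at hQ
    simp only [and_self, if_true, if_pos rfl, hQ, if_false, if_neg hQ]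
    rw [if_neg (fun h => hQ ⟨h.2, h.1⟩), spEps_rev]
    linear_combination (spEps M j) * spEps_sq M b
  · obtain ⟨ha, hb⟩ := hQ
    subst ha; subst hb
    simp only [and_comm] at hP
    simp only [and_self, if_true, if_pos rfl, hP, if_false, if_neg hP]
    rw [if_neg (fun h => hP ⟨h.2, h.1⟩), spEps_rev, spEps_rev]
    linear_combination (-spEps M i) * spEps_sq M b
  · simp only [if_neg hP, if_neg hQ,
      if_neg (fun h : b = i ∧ a = Fin.rev j => hP ⟨h.2, h.1⟩),
      if_neg (fun h : b = j ∧ a = Fin.rev i => hQ ⟨h.2, h.1⟩)]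
    ring

/-- The generators of 𝔰𝔭(2M) as elements of the Lie algebra. -/
def spX (M : ℕ) (a b : Fin (2 * M)) : spL M := ⟨spXmat M a b, spXmat_mem M a b⟩

section CubicCasimir

variable {R A ι : Type*} [CommRing R] [Ring A] [Algebra R A] [Fintype ι] (f : ι → ι → A)

theorem sum_mul_mul_cycle_eq_add {κ : R}
    (hcomm : ∀ a b, ∑ c, ⁅f a c, f c b⁆ = κ • f a b) :
    ∑ a, ∑ b, ∑ c, f a b * f b c * f c a =
      ∑ a, ∑ b, ∑ c, f a b * f c a * f b c + κ • ∑ a, ∑ b, f a b * f b a := by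
  have hcycle : ∀ a b c,
      f a b * f b c * f c a = f a b * f c a * f b c + f a b * ⁅f b c, f c a⁆ := by
    intro a b c
    rw [Ring.lie_def]
    noncomm_ring
  simp only [hcycle, Finset.sum_add_distrib, ← Finset.mul_sum, hcomm, mul_smul_comm,
    Finset.smul_sum]

theorem sum_mul_mul_anticycle_eq_neg (σ : Equiv.Perm ι) (ε : ι → R)
    (hε : ∀ i, ε i * ε i = 1)
    (hflip : ∀ a b, f a b = -(ε a * ε b) • f (σ b) (σ a)) :
    ∑ a, ∑ b, ∑ c, f a b * f c a * f b c = -∑ a, ∑ b, ∑ c, f a b * f b c * f c a := by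
  have hsign : ∀ a b c,
      f a b * f c a * f b c = -(f (σ b) (σ a) * f (σ a) (σ c) * f (σ c) (σ b)) := by
    intro a b c
    have hsigns : -(ε a * ε b) * -(ε c * ε a) * -(ε b * ε c) = -1 := by
      linear_combination (-(ε b * ε b * ε c * ε c)) * hε a - ε c * ε c * hε b - hε c
    rw [hflip a b, hflip c a, hflip b c, smul_mul_smul_comm, smul_mul_smul_comm, hsigns,
      neg_one_smul]
  simp only [hsign, Finset.sum_neg_distrib]
  rw [Finset.sum_comm]
  exact congrArg Neg.neg <| Fintype.sum_equiv σ _ _ fun a => Fintype.sum_equiv σ _ _ fun b =>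
    Fintype.sum_equiv σ _ _ fun c => rfl

theorem two_smul_sum_mul_mul_cycle_eq (σ : Equiv.Perm ι) (ε : ι → R)
    (hε : ∀ i, ε i * ε i = 1)
    (hflip : ∀ a b, f a b = -(ε a * ε b) • f (σ b) (σ a)) {κ : R}
    (hcomm : ∀ a b, ∑ c, ⁅f a c, f c b⁆ = κ • f a b) :
    (2 : R) • ∑ a, ∑ b, ∑ c, f a b * f b c * f c a =
      κ • ∑ a, ∑ b, f a b * f b a := by
  have h := sum_mul_mul_cycle_eq_add f hcomm
  rw [sum_mul_mul_anticycle_eq_neg f σ ε hε hflip] at h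
  rw [two_smul]
  nth_rewrite 1 [h]
  abel

end CubicCasimir

lemma Matrix.single_mul_single_eq_ite {n α : Type*} [Fintype n] [DecidableEq n]
    [NonUnitalNonAssocSemiring α] (i j k l : n) (x y : α) :
    single i j x * single k l y = if j = k then single i l (x * y) else 0 := by
  split_ifs with h
  · rw [h, single_mul_single_same]
  · exact single_mul_single_of_ne x i j k h y

section SymplecticGenerators

variable (M : ℕ)

lemma spEps_mul_spEps_rev (i : Fin (2 * M)) : spEps M i * spEps M (Fin.rev i) = -1 := by
  rw [spEps_rev, mul_neg, spEps_sq]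

lemma spXmat_eq_sub_single (a b : Fin (2 * M)) :
    spXmat M a b = single a b 1 - single (Fin.rev b) (Fin.rev a) (spEps M a * spEps M b) := by
  rw [spXmat, smul_smul, smul_single, smul_eq_mul, mul_one]

lemma spXmat_eq_neg_smul_rev (a b : Fin (2 * M)) :
    spXmat M a b = -(spEps M a * spEps M b) • spXmat M (Fin.rev b) (Fin.rev a) := by
  simp only [spXmat, Fin.rev_rev, spEps_rev]
  match_scalars
  · linear_combination (-(spEps M b * spEps M b)) * spEps_sq M a - spEps_sq M b
  · ring

lemma sum_single_rev_rev_one : ∑ c : Fin (2 * M), single (Fin.rev c) (Fin.rev c) (1 : ℂ) = 1 :=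
  (Equiv.sum_comp Fin.revPerm fun c => single c c 1).trans sum_single_one

lemma sum_spXmat_mul_spXmat (a b : Fin (2 * M)) :
    ∑ c, spXmat M a c * spXmat M c b =
      (2 * ((M : ℂ) + 1)) • single a b 1 + if a = b then 1 else 0 := by
  have hsq : ∀ c, spEps M a * spEps M c * (spEps M c * spEps M b) = spEps M a * spEps M b := by
    intro c
    linear_combination spEps M a * spEps M b * spEps_sq M c
  simp only [spXmat_eq_sub_single, sub_mul, mul_sub, Matrix.single_mul_single_eq_ite,
    Finset.sum_sub_distrib, Finset.sum_const, Finset.card_univ, Fintype.card_fin,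
    Finset.sum_ite_eq, Finset.sum_ite_eq', Finset.mem_univ, Fin.rev_inj, Finset.sum_ite_irrel,
    if_true, Fin.rev_rev, one_mul, mul_one, hsq, spEps_mul_spEps_rev, mul_comm (spEps M b.rev),
    ← single_neg, smul_zero]
  split_ifs with hab
  · subst hab
    rw [spEps_sq, sum_single_rev_rev_one]
    module
  · module

lemma sum_spXmat_mul_spXmat_swap (a b : Fin (2 * M)) :
    ∑ c, spXmat M c b * spXmat M a c =
      (spEps M a * spEps M b) • ∑ c, spXmat M (Fin.rev b) c * spXmat M c (Fin.rev a) := by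
  rw [Finset.smul_sum]
  refine Fintype.sum_equiv Fin.revPerm _ _ fun c => ?_
  rw [spXmat_eq_neg_smul_rev M c b, spXmat_eq_neg_smul_rev M a c, smul_mul_smul_comm,
    Fin.revPerm_apply]
  congr 1
  linear_combination spEps M a * spEps M b * spEps_sq M c

lemma sum_lie_spXmat (a b : Fin (2 * M)) :
    ∑ c, ⁅spXmat M a c, spXmat M c b⁆ = (2 * ((M : ℂ) + 1)) • spXmat M a b := by
  simp only [Ring.lie_def, Finset.sum_sub_distrib, sum_spXmat_mul_spXmat_swap,
    sum_spXmat_mul_spXmat, Fin.rev_inj, eq_comm (a := b) (b := a)]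
  rw [spXmat]
  split_ifs with hab
  · subst hab
    rw [spEps_sq, smul_smul, spEps_sq]
    module
  · module

lemma sum_lie_spX (a b : Fin (2 * M)) :
    ∑ c, ⁅spX M a c, spX M c b⁆ = (2 * ((M : ℂ) + 1)) • spX M a b :=
  Subtype.ext <| by
    simp only [AddSubmonoidClass.coe_finsetSum, LieSubalgebra.coe_bracket,
      SetLike.val_smul]
    exact sum_lie_spXmat M a b

lemma spX_eq_neg_smul_rev (a b : Fin (2 * M)) :
    spX M a b = -(spEps M a * spEps M b) • spX M (Fin.rev b) (Fin.rev a) :=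
  Subtype.ext <| spXmat_eq_neg_smul_rev M a b

end SymplecticGenerators

/-- C₃ = (M + 1)·C₂ in U(𝔰𝔭(2M)). -/
theorem sp_casimir_three (M : ℕ) :
    (∑ a : Fin (2 * M), ∑ b : Fin (2 * M), ∑ c : Fin (2 * M),
        UniversalEnvelopingAlgebra.ι ℂ (spX M a b) *
          UniversalEnvelopingAlgebra.ι ℂ (spX M b c) *
          UniversalEnvelopingAlgebra.ι ℂ (spX M c a)) =
      ((M : ℂ) + 1) • ∑ a : Fin (2 * M), ∑ b : Fin (2 * M),
        UniversalEnvelopingAlgebra.ι ℂ (spX M a b) *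
          UniversalEnvelopingAlgebra.ι ℂ (spX M b a) := by
  set f := fun a b => UniversalEnvelopingAlgebra.ι ℂ (spX M a b)
  have hflip : ∀ a b,
      f a b = -(spEps M a * spEps M b) • f (Fin.revPerm b) (Fin.revPerm a) := by
    intro a b
    simp only [f, Fin.revPerm_apply, ← map_smul, ← spX_eq_neg_smul_rev]
  have hcomm : ∀ a b, ∑ c, ⁅f a c, f c b⁆ = (2 * ((M : ℂ) + 1)) • f a b := by
    intro a b
    simp only [f, ← LieHom.map_lie, ← map_sum, sum_lie_spX, map_smul]
  have h := two_smul_sum_mul_mul_cycle_eq f Fin.revPerm (spEps M) (spEps_sq M) hflip hcomm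
  rw [mul_smul] at h
  exact smul_right_injective _ two_ne_zero h

end
end
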